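/- In the recursive max-linear model with propagating noise, every sub-path of a random critical path is itself random critical: if p = [j → … → i] satisfies d̄_{ji}(p) = b̄_{ji} and k is an intermediate node of p, then the sub-paths p₁ from j to k and p₂ from k to i satisfy d̄_{jk}(p₁) = b̄_{jk} and d̄_{ki}(p₂) = b̄_{ki}. -/

import Mathlib

open Matrix Finset MeasureTheory ProbabilityTheory Filter

noncomputable section

/-- Max-times (tropical) matrix product: `(F ⊙ G) i j = ⋁ k, F i k * G k j`. -/
def mOdot {m n p : ℕ} (F : Matrix (Fin m) (Fin n) NNReal) (G : Matrix (Fin n) (Fin p) NNReal) :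
    Matrix (Fin m) (Fin p) NNReal :=
  Matrix.of fun i j => Finset.univ.sup fun k => F i k * G k j

/-- Entrywise maximum of two matrices. -/
def mSup {m n : ℕ} (A B : Matrix (Fin m) (Fin n) NNReal) : Matrix (Fin m) (Fin n) NNReal :=
  Matrix.of fun i j => A i j ⊔ B i j

/-- Max-times power: `A^{⊙0} = I`, `A^{⊙(k+1)} = A^{⊙k} ⊙ A`. -/
def mPow {d : ℕ} (A : Matrix (Fin d) (Fin d) NNReal) : ℕ → Matrix (Fin d) (Fin d) NNReal
  | 0 => 1
  | k + 1 => mOdot (mPow A k) A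

/-- Kleene star: `B = ⋁_{k=0}^{d-1} C^{⊙k}`. -/
def kleene {d : ℕ} (C : Matrix (Fin d) (Fin d) NNReal) : Matrix (Fin d) (Fin d) NNReal :=
  Matrix.of fun i j => (Finset.range d).sup fun k => mPow C k i j

/-- `IsWalk C i j l` : `l` is the list of vertices after `i` of a walk from `i` to `j`
    along positive entries of `C`. -/
def IsWalk {d : ℕ} (C : Matrix (Fin d) (Fin d) NNReal) : Fin d → Fin d → List (Fin d) → Prop
  | i, j, [] => i = j
  | i, j, k :: l => 0 < C i k ∧ IsWalk C k j l

/-- Deterministic path weight: product of edge weights along a walk. -/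
def walkWeight {d : ℕ} (C : Matrix (Fin d) (Fin d) NNReal) : Fin d → List (Fin d) → NNReal
  | _, [] => 1
  | i, k :: l => C i k * walkWeight C k l

/-- Acyclicity: the only walk from a vertex to itself is the empty one. -/
def Acyclic {d : ℕ} (C : Matrix (Fin d) (Fin d) NNReal) : Prop :=
  ∀ i l, IsWalk C i i l → l = []

/-- Non-noisy ML coefficient: maximal deterministic path weight from `j` to `i`
    (`1` on the diagonal; `0` if there is no path). -/
def detB {d : ℕ} (C : Matrix (Fin d) (Fin d) NNReal) (j i : Fin d) : NNReal :=
  sSup {w | ∃ l, IsWalk C j i l ∧ w = walkWeight C j l}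

/-- Noisy path weight (without the initial noise factor `ε j`):
    `∏_l c_{k_l k_{l+1}} ε_{k_{l+1}}` along a walk. -/
def noisyWeight {d : ℕ} (C : Matrix (Fin d) (Fin d) NNReal) (ε : Fin d → NNReal) :
    Fin d → List (Fin d) → NNReal
  | _, [] => 1
  | i, k :: l => C i k * ε k * noisyWeight C ε k l

/-- Random (noisy) ML coefficient `b̄_{ji}`: maximal random path weight
    `d̄_{ji}(p) = ε_j ∏ c ε` from `j` to `i`; equals `ε j` on the diagonal,
    `0` if `j` is not an ancestor of `i`. -/
def barB {d : ℕ} (C : Matrix (Fin d) (Fin d) NNReal) (ε : Fin d → NNReal) (j i : Fin d) :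
    NNReal :=
  sSup {w | ∃ l, IsWalk C j i l ∧ w = ε j * noisyWeight C ε j l}

/-- `j` is a strict ancestor of `i` (there exists a nonempty path). -/
def Reach {d : ℕ} (C : Matrix (Fin d) (Fin d) NNReal) (j i : Fin d) : Prop :=
  ∃ l, l ≠ [] ∧ IsWalk C j i l

/-- Max-times product of a row vector with a matrix. -/
def vOdot {d : ℕ} (x : Fin d → NNReal) (A : Matrix (Fin d) (Fin d) NNReal) : Fin d → NNReal :=
  fun j => Finset.univ.sup fun k => x k * A k j

/-- Componentwise maximum of two vectors. -/
def vSup {d : ℕ} (x y : Fin d → NNReal) : Fin d → NNReal := fun i => x i ⊔ y i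

/-- Maximum of `f k` over all `k` satisfying `P` (0 if there is none). -/
def supOver {d : ℕ} (P : Fin d → Prop) (f : Fin d → NNReal) : NNReal :=
  sSup {w | ∃ k, P k ∧ w = f k}

end

/-! Concatenating walks multiplies random path weights up to the repeated noise factor:
`d̄_{ji}(p₁ p₂) ε_k = d̄_{jk}(p₁) d̄_{ki}(p₂)`, so `b̄_{jk} b̄_{ki} ≤ ε_k b̄_{ji}`. On a critical path
this becomes `b̄_{jk} b̄_{ki} ≤ d̄_{jk}(p₁) d̄_{ki}(p₂)`, and since positive noise makes all path weights
positive, each factor `d̄ ≤ b̄` must be an equality. Acyclicity makes the set of walks finite, so the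
maxima defining `b̄` are attained. -/

section RandomPathWeights

variable {d : ℕ} {C : Matrix (Fin d) (Fin d) NNReal} {ε : Fin d → NNReal} {i j k : Fin d}
  {l l₁ l₂ : List (Fin d)}

theorem IsWalk.append (h₁ : IsWalk C j k l₁) (h₂ : IsWalk C k i l₂) :
    IsWalk C j i (l₁ ++ l₂) := by
  induction l₁ generalizing j with
  | nil => cases h₁; exact h₂
  | cons a t ih => exact ⟨h₁.1, ih h₁.2⟩

theorem noisyWeight_append (h₁ : IsWalk C j k l₁) (l₂ : List (Fin d)) :
    noisyWeight C ε j (l₁ ++ l₂) = noisyWeight C ε j l₁ * noisyWeight C ε k l₂ := by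
  induction l₁ generalizing j with
  | nil => cases h₁; simp [noisyWeight]
  | cons a t ih =>
    simp only [List.cons_append, noisyWeight, ih h₁.2]
    ring

theorem mul_noisyWeight_append (h₁ : IsWalk C j k l₁) (l₂ : List (Fin d)) :
    ε j * noisyWeight C ε j (l₁ ++ l₂) * ε k =
      (ε j * noisyWeight C ε j l₁) * (ε k * noisyWeight C ε k l₂) := by
  rw [noisyWeight_append h₁]
  ring

theorem noisyWeight_pos (hε : ∀ k, 0 < ε k) (h : IsWalk C j i l) :
    0 < noisyWeight C ε j l := by
  induction l generalizing j with
  | nil => exact one_pos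
  | cons a t ih => exact mul_pos (mul_pos h.1 (hε a)) (ih h.2)

theorem IsWalk.exists_isWalk_of_mem (h : IsWalk C j i l) (hk : k ∈ l) :
    ∃ l', l' ≠ [] ∧ IsWalk C j k l' := by
  induction l generalizing j with
  | nil => simp at hk
  | cons a t ih =>
    rcases List.mem_cons.mp hk with rfl | hk
    · exact ⟨[k], List.cons_ne_nil _ _, h.1, rfl⟩
    · obtain ⟨l', -, hw⟩ := ih h.2 hk
      exact ⟨a :: l', List.cons_ne_nil _ _, h.1, hw⟩

theorem IsWalk.nodup (hacyc : Acyclic C) (h : IsWalk C j i l) : (j :: l).Nodup := by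
  induction l generalizing j with
  | nil => exact List.nodup_singleton j
  | cons a t ih =>
    refine List.nodup_cons.mpr ⟨fun hj => ?_, ih h.2⟩
    obtain ⟨l', hne, hw⟩ := h.exists_isWalk_of_mem hj
    exact hne (hacyc j l' hw)

theorem finite_setOf_isWalk (hacyc : Acyclic C) (j i : Fin d) :
    {l | IsWalk C j i l}.Finite := by
  refine (List.finite_length_le (Fin d) d).subset fun l hl => ?_
  have := (hl.nodup hacyc).length_le_card
  simp only [List.length_cons, Fintype.card_fin] at this
  exact Nat.le_of_succ_le this

theorem barB_eq_sSup_image (C : Matrix (Fin d) (Fin d) NNReal) (ε : Fin d → NNReal) (j i : Fin d) :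
    barB C ε j i = sSup ((fun l => ε j * noisyWeight C ε j l) '' {l | IsWalk C j i l}) := by
  simp only [barB, Set.image, Set.mem_ofPred_eq, eq_comm]

theorem le_barB (hacyc : Acyclic C) (h : IsWalk C j i l) :
    ε j * noisyWeight C ε j l ≤ barB C ε j i := by
  rw [barB_eq_sSup_image]
  exact le_csSup ((finite_setOf_isWalk hacyc j i).image _).bddAbove ⟨l, h, rfl⟩

theorem exists_isWalk_eq_barB (hacyc : Acyclic C) (hb : barB C ε j i ≠ 0) :
    ∃ l, IsWalk C j i l ∧ ε j * noisyWeight C ε j l = barB C ε j i := by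
  rw [barB_eq_sSup_image] at hb ⊢
  have hne : ((fun l => ε j * noisyWeight C ε j l) '' {l | IsWalk C j i l}).Nonempty :=
    Set.nonempty_iff_ne_empty.mpr fun he => hb (by rw [he, csSup_empty, bot_eq_zero])
  exact hne.csSup_mem ((finite_setOf_isWalk hacyc j i).image _)

theorem barB_mul_barB_le (hacyc : Acyclic C) (j k i : Fin d) :
    barB C ε j k * barB C ε k i ≤ barB C ε j i * ε k := by
  rcases eq_or_ne (barB C ε j k) 0 with h₁ | h₁
  · simp [h₁]
  rcases eq_or_ne (barB C ε k i) 0 with h₂ | h₂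
  · simp [h₂]
  obtain ⟨m₁, hm₁, hb₁⟩ := exists_isWalk_eq_barB hacyc h₁
  obtain ⟨m₂, hm₂, hb₂⟩ := exists_isWalk_eq_barB hacyc h₂
  calc barB C ε j k * barB C ε k i
      = ε j * noisyWeight C ε j (m₁ ++ m₂) * ε k := by
        rw [mul_noisyWeight_append hm₁, hb₁, hb₂]
    _ ≤ barB C ε j i * ε k := by gcongr; exact le_barB hacyc (hm₁.append hm₂)

end RandomPathWeights

theorem subpath_of_critical_is_critical_general (d : ℕ) (C : Matrix (Fin d) (Fin d) NNReal)
    (ε : Fin d → NNReal) (hacyc : Acyclic C) (hε : ∀ k, 1 ≤ ε k)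
    (j i k : Fin d) (l₁ l₂ : List (Fin d))
    (h₁ : IsWalk C j k l₁) (h₂ : IsWalk C k i l₂)
    (hcrit : ε j * noisyWeight C ε j (l₁ ++ l₂) = barB C ε j i) :
    ε j * noisyWeight C ε j l₁ = barB C ε j k ∧
    ε k * noisyWeight C ε k l₂ = barB C ε k i := by
  have hε₀ : ∀ k, 0 < ε k := fun k => one_pos.trans_le (hε k)
  have hsplit : barB C ε j k * barB C ε k i ≤
      (ε j * noisyWeight C ε j l₁) * (ε k * noisyWeight C ε k l₂) := by
    rw [← mul_noisyWeight_append h₁, hcrit]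
    exact barB_mul_barB_le hacyc j k i
  have hle₁ := le_barB (ε := ε) hacyc h₁
  have hle₂ := le_barB (ε := ε) hacyc h₂
  have hpos₁ : 0 < ε j * noisyWeight C ε j l₁ := mul_pos (hε₀ j) (noisyWeight_pos hε₀ h₁)
  have hpos₂ : 0 < ε k * noisyWeight C ε k l₂ := mul_pos (hε₀ k) (noisyWeight_pos hε₀ h₂)
  exact ⟨hle₁.antisymm (le_of_mul_le_mul_right ((mul_le_mul_right hle₂ _).trans hsplit) hpos₂),
    hle₂.antisymm (le_of_mul_le_mul_left ((mul_le_mul_left hle₁ _).trans hsplit) hpos₁)⟩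

/-- every sub-path of a random critical path is itself random critical. -/
theorem subpath_of_critical_is_critical (d : ℕ) (C : Matrix (Fin d) (Fin d) NNReal)
    (ε : Fin d → NNReal) (hacyc : Acyclic C) (hε : ∀ k, 1 ≤ ε k)
    (j i k : Fin d) (l₁ l₂ : List (Fin d)) (hne₁ : l₁ ≠ []) (hne₂ : l₂ ≠ [])
    (h₁ : IsWalk C j k l₁) (h₂ : IsWalk C k i l₂)
    (hcrit : ε j * noisyWeight C ε j (l₁ ++ l₂) = barB C ε j i) :
    ε j * noisyWeight C ε j l₁ = barB C ε j k ∧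
    ε k * noisyWeight C ε k l₂ = barB C ε k i :=
  subpath_of_critical_is_critical_general d C ε hacyc hε j i k l₁ l₂ h₁ h₂ hcrit
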